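/- If the set function f : 2^V → ℝ≥0 is monotone and α-weakly DR-submodular for some α ∈ (0,1], then for every feasible subset S ⊆ V and every point x = (p_1,…,p_K) ∈ ∏_{k=1}^K Δ_{n_k}, one has α·(f(S) − F(x)) ≤ ⟨ Σ_{k=1}^K (1/B_k)·1_{S∩V_k}, ∇F(x) ⟩. -/

import Mathlib

open Finset

noncomputable section

namespace Multinoulli

variable {K : ℕ}

/-- An element of the ground set `V`: a community index `k` together with the
index `m` of the element `v_k^m` inside its community `V_k`. -/
abbrev Elem (n : Fin K → ℕ) := Σ k : Fin K, Fin (n k)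

/-- A sampling slot: a community `k` together with a trial index `b ∈ {1,…,B_k}`. -/
abbrev Slot (B : Fin K → ℕ) := Σ k : Fin K, Fin (B k)

/-- A joint outcome of all the independent multinoulli trials; `none` encodes a
draw of `∅`, which contributes no element. -/
abbrev Choice (n B : Fin K → ℕ) := ∀ s : Slot B, Option (Fin (n s.1))

/-- The probability that `Multi(p_k)` (the `k`-th block of `x`) assigns to a given
outcome: `x ⟨k,m⟩` for the element `v_k^m` and `1 - Σ_m x ⟨k,m⟩` for `∅`. -/
def prob (n : Fin K → ℕ) (x : Elem n → ℝ) (k : Fin K) : Option (Fin (n k)) → ℝ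
  | some m => x ⟨k, m⟩
  | none => 1 - ∑ m : Fin (n k), x ⟨k, m⟩

/-- The probability of the joint outcome `e` (all trials are mutually independent). -/
def jointProb (n B : Fin K → ℕ) (x : Elem n → ℝ) (e : Choice n B) : ℝ :=
  ∏ s : Slot B, prob n x s.1 (e s)

/-- The subset of the ground set selected by the trials whose slot lies in `A`
(a draw of `∅` contributes no element to the union). -/
def chosen (n B : Fin K → ℕ) (e : Choice n B) (A : Finset (Slot B)) : Finset (Elem n) :=
  A.biUnion fun s => ((e s).map fun m => (⟨s.1, m⟩ : Elem n)).toFinset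

/-- The Multinoulli Extension `F` of the set function `f`:
`F(x) = E[f(∪_{k,b} {e_k^b})]` for mutually independent `e_k^b ∼ Multi(p_k)`. -/
def ME (n B : Fin K → ℕ) (f : Finset (Elem n) → ℝ) (x : Elem n → ℝ) : ℝ :=
  ∑ e : Choice n B, f (chosen n B e Finset.univ) * jointProb n B x e

/-- The first-order partial derivative `∂G/∂x_i` at `x`. -/
def pderiv (n : Fin K → ℕ) (G : (Elem n → ℝ) → ℝ) (i : Elem n) (x : Elem n → ℝ) : ℝ :=
  deriv (fun t => G (Function.update x i t)) (x i)

/-- The gradient `∇G(x)`. -/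
def grad (n : Fin K → ℕ) (G : (Elem n → ℝ) → ℝ) (x : Elem n → ℝ) : Elem n → ℝ :=
  fun i => pderiv n G i x

/-- The second-order partial derivative `∂²G/∂x_i∂x_j` at `x`. -/
def pderiv2 (n : Fin K → ℕ) (G : (Elem n → ℝ) → ℝ) (i j : Elem n) (x : Elem n → ℝ) : ℝ :=
  pderiv n (fun y => pderiv n G j y) i x

/-- The Euclidean inner product on `∏_k ℝ^{n_k}`. -/
def inner' (n : Fin K → ℕ) (u v : Elem n → ℝ) : ℝ := ∑ i : Elem n, u i * v i

/-- Membership in the product of simplices `∏_{k=1}^K Δ_{n_k}`. -/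
def InSimplex (n : Fin K → ℕ) (x : Elem n → ℝ) : Prop :=
  (∀ i, 0 ≤ x i) ∧ ∀ k : Fin K, ∑ m : Fin (n k), x ⟨k, m⟩ ≤ 1

/-- Feasibility for the partition constraint: `|S ∩ V_k| ≤ B_k` for all `k`. -/
def Feasible (n B : Fin K → ℕ) (S : Finset (Elem n)) : Prop :=
  ∀ k : Fin K, (S.filter fun i => i.1 = k).card ≤ B k

/-- Monotonicity of a set function. -/
def MonotoneSet (n : Fin K → ℕ) (f : Finset (Elem n) → ℝ) : Prop :=
  ∀ A B : Finset (Elem n), A ⊆ B → f A ≤ f B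

/-- The marginal contribution `f(v|A) = f(A ∪ {v}) - f(A)`. -/
def marg (n : Fin K → ℕ) (f : Finset (Elem n) → ℝ) (v : Elem n) (A : Finset (Elem n)) : ℝ :=
  f (insert v A) - f A

/-- `α`-weak DR-submodularity: `f(v|A) ≥ α·f(v|B)` for all `A ⊆ B` and `v ∉ B`. -/
def WeaklyDR (n : Fin K → ℕ) (f : Finset (Elem n) → ℝ) (α : ℝ) : Prop :=
  ∀ A B : Finset (Elem n), A ⊆ B → ∀ v, v ∉ B → α * marg n f v B ≤ marg n f v A

/-- `γ`-weak submodularity from below. -/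
def WeaklyBelow (n : Fin K → ℕ) (f : Finset (Elem n) → ℝ) (γ : ℝ) : Prop :=
  ∀ A B : Finset (Elem n), A ⊆ B → γ * (f B - f A) ≤ ∑ v ∈ B \ A, marg n f v A

/-- `β`-weak submodularity from above. -/
def WeaklyAbove (n : Fin K → ℕ) (f : Finset (Elem n) → ℝ) (β : ℝ) : Prop :=
  ∀ A B : Finset (Elem n), A ⊆ B → ∑ v ∈ B \ A, marg n f v (B.erase v) ≤ β * (f B - f A)

/-- The scaled indicator vector `Σ_{k=1}^K (1/B_k)·1_{S∩V_k}`. -/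
def indVec (n B : Fin K → ℕ) (S : Finset (Elem n)) : Elem n → ℝ :=
  fun i => if i ∈ S then ((B i.1 : ℝ))⁻¹ else 0

end Multinoulli

/-!
By the product rule over the `B_k` trials of community `k`, and after resampling the
differentiated trial, `∂F/∂x_v = ∑_b E[f(v | C_b)]` for `v ∈ V_k`, where `C_b` is the set drawn by
all trials except the `b`-th one of community `k`. Fix an outcome with drawn set `C ⊇ C_b`.
Monotonicity and telescoping `f(C ∪ S) - f(C)` along `S` bound `α (f(S) - f(C))` by a sum over
`v ∈ S` of `α f(v | A)` with `C ⊆ A`, and weak DR-submodularity bounds each such term by the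
average `B_k⁻¹ ∑_b f(v | C_b)`. Taking expectations gives the claim.
-/

section ProductWeights

variable {ι : Type*} [Fintype ι] [DecidableEq ι] {β : ι → Type*} [∀ i, Fintype (β i)]

lemma Fintype.sum_sum_update_apply {M : Type*} [AddCommMonoid M] (i : ι)
    (F : (∀ j, β j) → β i → M) :
    ∑ e, ∑ o, F (Function.update e i o) (e i) = ∑ e, ∑ o, F e o := by
  let σ : Function.Involutive fun p : (∀ j, β j) × β i => (Function.update p.1 i p.2, p.1 i) :=
    fun p => by simp
  rw [← Fintype.sum_prod_type', ← Fintype.sum_prod_type']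
  exact Equiv.sum_comp σ.toPerm fun p : (∀ j, β j) × β i => F p.1 p.2

/-- The left side is the derivative of `∑ e, g e * ∏ j, w j (e j)` when only the `i`-th factor
moves, with velocity `h`; the right side resamples the `i`-th coordinate. -/
lemma Fintype.sum_mul_prod_erase_mul (w : ∀ j, β j → ℝ) (i : ι) (hw : ∑ o, w i o = 1)
    (g : (∀ j, β j) → ℝ) (h : β i → ℝ) :
    ∑ e, g e * ((∏ j ∈ univ.erase i, w j (e j)) * h (e i))
      = ∑ e, (∑ o, h o * g (Function.update e i o)) * ∏ j, w j (e j) := by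
  have hQ : ∀ e o, ∏ j ∈ univ.erase i, w j (Function.update e i o j)
      = ∏ j ∈ univ.erase i, w j (e j) := fun e o =>
    Finset.prod_congr rfl fun j hj => by rw [Function.update_of_ne (ne_of_mem_erase hj)]
  calc ∑ e, g e * ((∏ j ∈ univ.erase i, w j (e j)) * h (e i))
      = ∑ e, ∑ o, w i o * (g e * ((∏ j ∈ univ.erase i, w j (e j)) * h (e i))) := by
        simp only [← sum_mul, hw, one_mul]
    _ = ∑ e, ∑ o, w i (e i) *
          (g (Function.update e i o) * ((∏ j ∈ univ.erase i, w j (e j)) * h o)) := by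
        rw [← Fintype.sum_sum_update_apply i]
        simp only [Function.update_self, hQ]
    _ = _ := by
        refine Finset.sum_congr rfl fun e _ => ?_
        rw [sum_mul, ← mul_prod_erase univ _ (mem_univ i)]
        exact Finset.sum_congr rfl fun o _ => by ring

end ProductWeights

namespace Multinoulli

variable {K : ℕ} {n B : Fin K → ℕ}

section Distribution

lemma prob_nonneg {x : Elem n → ℝ} (hx : InSimplex n x) (k : Fin K) :
    ∀ o : Option (Fin (n k)), 0 ≤ prob n x k o
  | some m => hx.1 ⟨k, m⟩
  | none => by simpa [prob] using hx.2 k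

lemma sum_prob (x : Elem n → ℝ) (k : Fin K) : ∑ o, prob n x k o = 1 := by
  simp [Fintype.sum_option, prob]

lemma jointProb_nonneg {x : Elem n → ℝ} (hx : InSimplex n x) (e : Choice n B) :
    0 ≤ jointProb n B x e :=
  prod_nonneg fun s _ => prob_nonneg hx s.1 (e s)

lemma sum_jointProb (x : Elem n → ℝ) : ∑ e : Choice n B, jointProb n B x e = 1 := by
  have h := Fintype.prod_sum fun (s : Slot B) o => prob n x s.1 o
  simp only [sum_prob, prod_const_one] at h
  exact h.symm

lemma sub_ME_eq_sum (f : Finset (Elem n) → ℝ) (x : Elem n → ℝ) (c : ℝ) :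
    c - ME n B f x = ∑ e, (c - f (chosen n B e univ)) * jointProb n B x e := by
  simp only [ME, sub_mul, sum_sub_distrib, ← mul_sum, sum_jointProb, mul_one]

end Distribution

section Derivative

/-- `probDeriv v j o` is the partial derivative `∂ prob n x j o / ∂ x v` (a constant). -/
def probDeriv (v : Elem n) (j : Fin K) : Option (Fin (n j)) → ℝ
  | some m => if (⟨j, m⟩ : Elem n) = v then 1 else 0
  | none => if j = v.1 then -1 else 0

lemma probDeriv_of_ne {v : Elem n} {j : Fin K} (hj : j ≠ v.1) (o : Option (Fin (n j))) :
    probDeriv v j o = 0 := by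
  cases o with
  | some m => simp [probDeriv, show (⟨j, m⟩ : Elem n) ≠ v from fun h => hj (by rw [← h])]
  | none => simp [probDeriv, hj]

lemma sum_probDeriv_mul (k : Fin K) (m : Fin (n k)) (g : Option (Fin (n k)) → ℝ) :
    ∑ o, probDeriv ⟨k, m⟩ k o * g o = g (some m) - g none := by
  simp [Fintype.sum_option, probDeriv, sub_eq_neg_add]

lemma prob_update (x : Elem n → ℝ) (v : Elem n) (t : ℝ) (j : Fin K) (o : Option (Fin (n j))) :
    prob n (Function.update x v t) j o = prob n x j o + (t - x v) * probDeriv v j o := by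
  have hupd : ∀ i, Function.update x v t i = x i + (t - x v) * if i = v then 1 else 0 := by
    intro i
    rcases eq_or_ne i v with rfl | hi
    · simp
    · simp [hi]
  obtain ⟨k, m⟩ := v
  cases o with
  | some m' => simp only [prob, probDeriv, hupd]
  | none =>
    simp only [prob, probDeriv, hupd, sum_add_distrib, ← mul_sum]
    rcases eq_or_ne j k with rfl | hj
    · simp only [Sigma.mk.injEq, heq_eq_eq, true_and, sum_ite_eq', mem_univ, ↓reduceIte, mul_one]
      ring
    · simp [hj]

lemma hasDerivAt_jointProb (x : Elem n → ℝ) (v : Elem n) (e : Choice n B) :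
    HasDerivAt (fun t => jointProb n B (Function.update x v t) e)
      (∑ s, (∏ s' ∈ univ.erase s, prob n x s'.1 (e s')) * probDeriv v s.1 (e s)) (x v) := by
  have hprob : ∀ s : Slot B, HasDerivAt (fun t => prob n (Function.update x v t) s.1 (e s))
      (probDeriv v s.1 (e s)) (x v) := fun s => by
    simp only [prob_update]
    simpa using (((hasDerivAt_id (x v)).sub_const (x v)).mul_const
      (probDeriv v s.1 (e s))).const_add (prob n x s.1 (e s))
  simpa [jointProb, Function.update_eq_self] using
    HasDerivAt.fun_finsetProd fun s (_ : s ∈ univ) => hprob s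

lemma chosen_update (e : Choice n B) (s : Slot B) (o : Option (Fin (n s.1))) :
    chosen n B (Function.update e s o) univ
      = (o.map fun m => (⟨s.1, m⟩ : Elem n)).toFinset ∪ chosen n B e (univ.erase s) := by
  unfold chosen
  conv_lhs => rw [← insert_erase (mem_univ s), biUnion_insert, Function.update_self]
  congr 1
  exact biUnion_congr rfl fun s' hs' => by rw [Function.update_of_ne (ne_of_mem_erase hs')]

lemma chosen_erase_subset (e : Choice n B) (s : Slot B) :
    chosen n B e (univ.erase s) ⊆ chosen n B e univ :=
  biUnion_subset_biUnion_of_subset_left _ (erase_subset _ _)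

lemma sum_sum_probDeriv_mul_chosen_update (f : Finset (Elem n) → ℝ) (e : Choice n B)
    (v : Elem n) :
    ∑ s : Slot B, ∑ o, probDeriv v s.1 o * f (chosen n B (Function.update e s o) univ)
      = ∑ b : Fin (B v.1), marg n f v (chosen n B e (univ.erase ⟨v.1, b⟩)) := by
  obtain ⟨k, m⟩ := v
  rw [Fintype.sum_sigma, sum_eq_single_of_mem k (mem_univ k)]
  · refine Finset.sum_congr rfl fun b _ => ?_
    dsimp only
    rw [sum_probDeriv_mul, chosen_update, chosen_update]
    simp [marg]
  · intro j _ hj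
    simp only [probDeriv_of_ne (v := (⟨k, m⟩ : Elem n)) hj, zero_mul, sum_const_zero]

lemma hasDerivAt_ME (f : Finset (Elem n) → ℝ) (x : Elem n → ℝ) (v : Elem n) :
    HasDerivAt (fun t => ME n B f (Function.update x v t))
      (∑ e, (∑ b : Fin (B v.1), marg n f v (chosen n B e (univ.erase ⟨v.1, b⟩)))
        * jointProb n B x e) (x v) := by
  refine (HasDerivAt.fun_sum fun e (_ : e ∈ univ) =>
    (hasDerivAt_jointProb x v e).const_mul (f (chosen n B e univ))).congr_deriv ?_
  calc ∑ e : Choice n B, f (chosen n B e univ)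
        * ∑ s, (∏ s' ∈ univ.erase s, prob n x s'.1 (e s')) * probDeriv v s.1 (e s)
      = ∑ s : Slot B, ∑ e : Choice n B, f (chosen n B e univ)
          * ((∏ s' ∈ univ.erase s, prob n x s'.1 (e s')) * probDeriv v s.1 (e s)) := by
        simp only [mul_sum]
        exact sum_comm
    _ = ∑ s : Slot B, ∑ e : Choice n B, (∑ o, probDeriv v s.1 o
          * f (chosen n B (Function.update e s o) univ)) * jointProb n B x e :=
        Finset.sum_congr rfl fun s _ => Fintype.sum_mul_prod_erase_mul _ s (sum_prob x s.1) _ _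
    _ = _ := by
        rw [sum_comm]
        simp only [← sum_mul, sum_sum_probDeriv_mul_chosen_update]

lemma pderiv_ME (f : Finset (Elem n) → ℝ) (x : Elem n → ℝ) (v : Elem n) :
    pderiv n (ME n B f) v x
      = ∑ e, (∑ b : Fin (B v.1), marg n f v (chosen n B e (univ.erase ⟨v.1, b⟩)))
        * jointProb n B x e :=
  (hasDerivAt_ME f x v).deriv

end Derivative

section SetFunction

variable {f : Finset (Elem n) → ℝ} {α : ℝ}

lemma marg_nonneg (hmono : MonotoneSet n f) (v : Elem n) (A : Finset (Elem n)) :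
    0 ≤ marg n f v A :=
  sub_nonneg.2 (hmono _ _ (subset_insert v A))

lemma WeaklyDR.mul_marg_le (hDR : WeaklyDR n f α) (hmono : MonotoneSet n f)
    {A A' : Finset (Elem n)} (hA : A ⊆ A') (v : Elem n) :
    α * marg n f v A' ≤ marg n f v A := by
  by_cases hv : v ∈ A'
  · simpa [marg, insert_eq_of_mem hv] using marg_nonneg hmono v A
  · exact hDR A A' hA v hv

lemma mul_union_sub_le_sum {C T : Finset (Elem n)} {g : Elem n → ℝ}
    (hg : ∀ v ∈ T, ∀ A, C ⊆ A → α * marg n f v A ≤ g v) :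
    α * (f (C ∪ T) - f C) ≤ ∑ v ∈ T, g v := by
  induction T using Finset.induction_on with
  | empty => simp
  | insert a T ha ih =>
    have hstep := hg a (mem_insert_self a T) (C ∪ T) subset_union_left
    have hrest := ih fun v hv => hg v (mem_insert_of_mem hv)
    rw [marg] at hstep
    rw [sum_insert ha, union_insert]
    linarith

lemma mul_sub_le_sum_inv_mul_sum_marg (hB : ∀ k, 0 < B k) (hmono : MonotoneSet n f)
    (hα : 0 ≤ α) (hDR : WeaklyDR n f α) (S : Finset (Elem n)) (e : Choice n B) :
    α * (f S - f (chosen n B e univ))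
      ≤ ∑ v ∈ S, (B v.1 : ℝ)⁻¹
          * ∑ b : Fin (B v.1), marg n f v (chosen n B e (univ.erase ⟨v.1, b⟩)) := by
  calc α * (f S - f (chosen n B e univ))
      ≤ α * (f (chosen n B e univ ∪ S) - f (chosen n B e univ)) :=
        mul_le_mul_of_nonneg_left (sub_le_sub_right (hmono _ _ subset_union_right) _) hα
    _ ≤ _ := mul_union_sub_le_sum fun v _ A hA => by
        rw [le_inv_mul_iff₀ (by exact_mod_cast hB v.1)]
        simpa using card_nsmul_le_sum univ _ _ fun b _ =>
          hDR.mul_marg_le hmono ((chosen_erase_subset e ⟨v.1, b⟩).trans hA) v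

end SetFunction

lemma inner'_indVec (S : Finset (Elem n)) (g : Elem n → ℝ) :
    inner' n (indVec n B S) g = ∑ v ∈ S, (B v.1 : ℝ)⁻¹ * g v := by
  simp only [inner', indVec, ite_mul, zero_mul]
  rw [sum_ite_mem, univ_inter]

theorem multinoulliExtension_dr_gap_bound_general {K : ℕ} (n B : Fin K → ℕ)
    (hB : ∀ k, 0 < B k)
    (f : Finset (Elem n) → ℝ)
    (hmono : MonotoneSet n f)
    (α : ℝ) (hα0 : 0 < α) (hDR : WeaklyDR n f α)
    (S : Finset (Elem n))
    (x : Elem n → ℝ) (hx : InSimplex n x) :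
    α * (f S - ME n B f x) ≤ inner' n (indVec n B S) (grad n (ME n B f) x) := by
  calc α * (f S - ME n B f x)
      = ∑ e, α * (f S - f (chosen n B e univ)) * jointProb n B x e := by
        rw [sub_ME_eq_sum, mul_sum]
        simp only [mul_assoc]
    _ ≤ ∑ e, (∑ v ∈ S, (B v.1 : ℝ)⁻¹
          * ∑ b : Fin (B v.1), marg n f v (chosen n B e (univ.erase ⟨v.1, b⟩)))
          * jointProb n B x e :=
        sum_le_sum fun e _ => mul_le_mul_of_nonneg_right
          (mul_sub_le_sum_inv_mul_sum_marg hB hmono hα0.le hDR S e) (jointProb_nonneg hx e)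
    _ = inner' n (indVec n B S) (grad n (ME n B f) x) := by
        simp only [inner'_indVec, grad, pderiv_ME, mul_sum, sum_mul]
        rw [sum_comm]
        simp only [mul_assoc]

theorem multinoulliExtension_dr_gap_bound {K : ℕ} (n B : Fin K → ℕ) (hn : ∀ k, 1 ≤ n k)
    (hB : ∀ k, 0 < B k) (hBn : ∀ k, B k ≤ n k)
    (f : Finset (Elem n) → ℝ) (hf0 : ∀ S, 0 ≤ f S)
    (hmono : MonotoneSet n f)
    (α : ℝ) (hα0 : 0 < α) (hα1 : α ≤ 1) (hDR : WeaklyDR n f α)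
    (S : Finset (Elem n)) (hS : Feasible n B S)
    (x : Elem n → ℝ) (hx : InSimplex n x) :
    α * (f S - ME n B f x) ≤ inner' n (indVec n B S) (grad n (ME n B f) x) :=
  multinoulliExtension_dr_gap_bound_general n B hB f hmono α hα0 hDR S x hx

end Multinoulli
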